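/- arXiv:1412.6792 — 8 statements merged into one kernel-verified Lean document; each statement's English description precedes it below -/
import Mathlib

section
/- Let s̃₁, z̃₁ : [1;ν] → [1;ν] satisfy: s̃₁(k) is an index of the row s(k) for all k, and z̃₁(l) is an index of the column z(l) for all l. Then (z̃₁(s̃₁(k)) = k and s̃₁(z̃₁(k)) = k for all k ∈ [1;ν]) if and only if (z(s̃₁(l)) = j whenever l is an index of column j, and s(z̃₁(k)) = i whenever k is an index of row i). -/
/-- Every `k ∈ [1;ν]` is an index of some column `j ∈ [1;m]`. -/
lemma exists_col (f : ℕ → ℕ) (m ν k : ℕ) (h1 : f 1 = 1) (hm : f (m + 1) = ν + 1)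
    (hk1 : 1 ≤ k) (hkν : k ≤ ν) : ∃ j, 1 ≤ j ∧ j ≤ m ∧ f j ≤ k ∧ k < f (j + 1) := by
  have hPm : k < f (m + 1) := by omega
  classical
  have hex : ∃ t, k < f (t + 1) := ⟨m, hPm⟩
  let j := Nat.find hex
  have hspec : k < f (j + 1) := Nat.find_spec hex
  have hle : j ≤ m := Nat.find_le hPm
  have hj1 : 1 ≤ j := by
    by_contra h
    have hj0 : j = 0 := by omega
    have : k < f (j + 1) := hspec
    rw [hj0] at this
    simp only [Nat.zero_add, h1] at this
    omega
  have hmin : ¬ k < f ((j - 1) + 1) := Nat.find_min hex (by omega)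
  have : (j - 1) + 1 = j := by omega
  rw [this] at hmin
  exact ⟨j, hj1, hle, by omega, hspec⟩

/-- Uniqueness of the column an index belongs to. -/
lemma col_unique (f : ℕ → ℕ) (m : ℕ)
    (hmono : ∀ j k, 1 ≤ j → j ≤ k → k ≤ m + 1 → f j ≤ f k)
    (l j j' : ℕ) (hj : 1 ≤ j) (hjm : j ≤ m) (hj' : 1 ≤ j') (hj'm : j' ≤ m)
    (h1 : f j ≤ l) (h2 : l < f (j + 1)) (h3 : f j' ≤ l) (h4 : l < f (j' + 1)) :
    j = j' := by
  rcases lt_trichotomy j j' with h | h | h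
  · have := hmono (j + 1) j' (by omega) (by omega) (by omega); omega
  · exact h
  · have := hmono (j' + 1) j (by omega) (by omega) (by omega); omega

/-- Lemma 1 of the paper (uniqueness/characterization of the linking arrays):
given CCS representations `(s, is)` of `X` and `(z, iz)` of `Xᵀ`, and arrays
`s1, z1` such that `s1 k` is an index of the row `s k` and `z1 l` is an index
of the column `z l`, the arrays are mutually inverse on `[1;ν]` iff
`z (s1 l) = j` whenever `l` is an index of column `j` and `s (z1 k) = i`
whenever `k` is an index of row `i`. -/
theorem linking_arrays_characterization (n m ν : ℕ) (hν : 0 < ν)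
    (X : ℕ → ℕ → Bool)
    (s is z iz : ℕ → ℕ)
    -- CCS representation of X
    (his_mono : ∀ j k, 1 ≤ j → j ≤ k → k ≤ m + 1 → is j ≤ is k)
    (his1 : is 1 = 1) (hism : is (m + 1) = ν + 1)
    (hs_inj : ∀ j, 1 ≤ j → j ≤ m → ∀ k l, is j ≤ k → k < is (j + 1) →
      is j ≤ l → l < is (j + 1) → s k = s l → k = l)
    (hs_im : ∀ j, 1 ≤ j → j ≤ m → ∀ i,
      ((∃ k, is j ≤ k ∧ k < is (j + 1) ∧ s k = i) ↔ (1 ≤ i ∧ i ≤ n ∧ X i j = true)))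
    -- CCS representation of Xᵀ
    (hiz_mono : ∀ i k, 1 ≤ i → i ≤ k → k ≤ n + 1 → iz i ≤ iz k)
    (hiz1 : iz 1 = 1) (hizn : iz (n + 1) = ν + 1)
    (hz_inj : ∀ i, 1 ≤ i → i ≤ n → ∀ k l, iz i ≤ k → k < iz (i + 1) →
      iz i ≤ l → l < iz (i + 1) → z k = z l → k = l)
    (hz_im : ∀ i, 1 ≤ i → i ≤ n → ∀ j,
      ((∃ k, iz i ≤ k ∧ k < iz (i + 1) ∧ z k = j) ↔ (1 ≤ j ∧ j ≤ m ∧ X i j = true)))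
    -- the candidate linking arrays
    (s1 z1 : ℕ → ℕ)
    (hs1 : ∀ k, 1 ≤ k → k ≤ ν → iz (s k) ≤ s1 k ∧ s1 k < iz (s k + 1))
    (hz1 : ∀ l, 1 ≤ l → l ≤ ν → is (z l) ≤ z1 l ∧ z1 l < is (z l + 1)) :
    ((∀ k, 1 ≤ k → k ≤ ν → z1 (s1 k) = k ∧ s1 (z1 k) = k)
      ↔ ((∀ l j, 1 ≤ j → j ≤ m → is j ≤ l → l < is (j + 1) → z (s1 l) = j)
        ∧ (∀ k i, 1 ≤ i → i ≤ n → iz i ≤ k → k < iz (i + 1) → s (z1 k) = i))) := by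
  -- basic bounds helpers
  have hcolb : ∀ l j, 1 ≤ j → j ≤ m → is j ≤ l → l < is (j + 1) → 1 ≤ l ∧ l ≤ ν := by
    intro l j hj hjm h1 h2
    have := his_mono 1 j (by omega) hj (by omega)
    have := his_mono (j + 1) (m + 1) (by omega) (by omega) (by omega)
    omega
  have hrowb : ∀ k i, 1 ≤ i → i ≤ n → iz i ≤ k → k < iz (i + 1) → 1 ≤ k ∧ k ≤ ν := by
    intro k i hi hin h1 h2
    have := hiz_mono 1 i (by omega) hi (by omega)
    have := hiz_mono (i + 1) (n + 1) (by omega) (by omega) (by omega)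
    omega
  constructor
  · rintro H
    constructor
    · intro l j hj hjm h1 h2
      have hlb := hcolb l j hj hjm h1 h2
      obtain ⟨hsl1, hsln, _⟩ := (hs_im j hj hjm (s l)).mp ⟨l, h1, h2, rfl⟩
      obtain ⟨hb1, hb2⟩ := hs1 l hlb.1 hlb.2
      have hs1b := hrowb (s1 l) (s l) hsl1 hsln hb1 hb2
      obtain ⟨hzj1, hzjm, _⟩ := (hz_im (s l) hsl1 hsln (z (s1 l))).mp ⟨s1 l, hb1, hb2, rfl⟩
      obtain ⟨hc1, hc2⟩ := hz1 (s1 l) hs1b.1 hs1b.2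
      have hinv := (H l hlb.1 hlb.2).1
      rw [hinv] at hc1 hc2
      exact col_unique is m his_mono l (z (s1 l)) j hzj1 hzjm hj hjm hc1 hc2 h1 h2
    · intro k i hi hin h1 h2
      have hkb := hrowb k i hi hin h1 h2
      obtain ⟨hzk1, hzkm, _⟩ := (hz_im i hi hin (z k)).mp ⟨k, h1, h2, rfl⟩
      obtain ⟨hb1, hb2⟩ := hz1 k hkb.1 hkb.2
      have hz1b := hcolb (z1 k) (z k) hzk1 hzkm hb1 hb2
      obtain ⟨hsi1, hsin, _⟩ := (hs_im (z k) hzk1 hzkm (s (z1 k))).mp ⟨z1 k, hb1, hb2, rfl⟩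
      obtain ⟨hc1, hc2⟩ := hs1 (z1 k) hz1b.1 hz1b.2
      have hinv := (H k hkb.1 hkb.2).2
      rw [hinv] at hc1 hc2
      exact col_unique iz n hiz_mono k (s (z1 k)) i hsi1 hsin hi hin hc1 hc2 h1 h2
  · rintro ⟨H1, H2⟩ k hk1 hkν
    constructor
    · obtain ⟨j, hj, hjm, h1, h2⟩ := exists_col is m ν k his1 hism hk1 hkν
      have hzs1 : z (s1 k) = j := H1 k j hj hjm h1 h2
      obtain ⟨hsk1, hskn, _⟩ := (hs_im j hj hjm (s k)).mp ⟨k, h1, h2, rfl⟩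
      obtain ⟨hb1, hb2⟩ := hs1 k hk1 hkν
      have hs1b := hrowb (s1 k) (s k) hsk1 hskn hb1 hb2
      have hsz : s (z1 (s1 k)) = s k := H2 (s1 k) (s k) hsk1 hskn hb1 hb2
      obtain ⟨hc1, hc2⟩ := hz1 (s1 k) hs1b.1 hs1b.2
      rw [hzs1] at hc1 hc2
      exact (hs_inj j hj hjm (z1 (s1 k)) k hc1 hc2 h1 h2 hsz).symm ▸
        (hs_inj j hj hjm (z1 (s1 k)) k hc1 hc2 h1 h2 hsz)
    · obtain ⟨i, hi, hin, h1, h2⟩ := exists_col iz n ν k hiz1 hizn hk1 hkν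
      have hsz1 : s (z1 k) = i := H2 k i hi hin h1 h2
      obtain ⟨hzk1, hzkm, _⟩ := (hz_im i hi hin (z k)).mp ⟨k, h1, h2, rfl⟩
      obtain ⟨hb1, hb2⟩ := hz1 k hk1 hkν
      have hz1b := hcolb (z1 k) (z k) hzk1 hzkm hb1 hb2
      have hzs : z (s1 (z1 k)) = z k := H1 (z1 k) (z k) hzk1 hzkm hb1 hb2
      obtain ⟨hc1, hc2⟩ := hs1 (z1 k) hz1b.1 hz1b.2
      rw [hsz1] at hc1 hc2
      exact hz_inj i hi hin (s1 (z1 k)) k hc1 hc2 h1 h2 hzs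
end

section
/- Given CCS representations (s, i_s) of X and (z, i_z) of Xᵀ, there exist unique arrays s̃, z̃ : [1;ν] → [1;ν] such that: s̃(k) is an index of the row s(k) and z(s̃(l)) = j whenever l is an index of column j; z̃(l) is an index of the column z(l) and s(z̃(k)) = i whenever k is an index of row i. Moreover s̃ and z̃ are mutually inverse permutations of [1;ν]. -/
open Classical in
/-- Existence: every `l ∈ [1;ν]` lies in some CCS interval. -/
lemma ccs_interval_exists (f : ℕ → ℕ) (m ν : ℕ)
    (hmono : ∀ j k, 1 ≤ j → j ≤ k → k ≤ m + 1 → f j ≤ f k)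
    (h1 : f 1 = 1) (hm : f (m + 1) = ν + 1) :
    ∀ l, 1 ≤ l → l ≤ ν → ∃ j, 1 ≤ j ∧ j ≤ m ∧ f j ≤ l ∧ l < f (j + 1) := by
  intro l hl1 hlν
  have hm1 : 1 ≤ m := by
    rcases Nat.eq_zero_or_pos m with hm0 | h
    · subst hm0; rw [h1] at hm; omega
    · exact h
  set P : ℕ → Prop := fun j => f j ≤ l with hP
  have hP1 : P 1 := by simp [hP, h1, hl1]
  set J := Nat.findGreatest P m with hJ
  have hJ1 : 1 ≤ J := Nat.le_findGreatest hm1 hP1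
  have hJm : J ≤ m := Nat.findGreatest_le m
  have hfJ : f J ≤ l := Nat.findGreatest_spec hm1 hP1
  refine ⟨J, hJ1, hJm, hfJ, ?_⟩
  rcases eq_or_lt_of_le hJm with heq | hlt
  · rw [heq, hm]; omega
  · have := Nat.findGreatest_is_greatest (P := P) (Nat.lt_succ_self J) hlt
    simpa [hP] using Nat.lt_of_not_le this

/-- Uniqueness: CCS intervals are pairwise disjoint. -/
lemma ccs_interval_unique (f : ℕ → ℕ) (m : ℕ)
    (hmono : ∀ j k, 1 ≤ j → j ≤ k → k ≤ m + 1 → f j ≤ f k)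
    {l j j' : ℕ} (hj1 : 1 ≤ j) (hjm : j ≤ m) (h1 : f j ≤ l) (h2 : l < f (j + 1))
    (hj'1 : 1 ≤ j') (hj'm : j' ≤ m) (h1' : f j' ≤ l) (h2' : l < f (j' + 1)) :
    j = j' := by
  rcases lt_trichotomy j j' with h | h | h
  · have : f (j + 1) ≤ f j' := hmono (j + 1) j' (by omega) (by omega) (by omega)
    omega
  · exact h
  · have : f (j' + 1) ≤ f j := hmono (j' + 1) j (by omega) (by omega) (by omega)
    omega

/-- Existence and uniqueness of the linking arrays `s̃, z̃` for CCS
representations of `X` and `Xᵀ`; moreover they are mutually inverse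
permutations of `[1;ν]`. -/
theorem linking_arrays_exists_unique (n m ν : ℕ) (hν : 0 < ν)
    (X : ℕ → ℕ → Bool)
    (s is z iz : ℕ → ℕ)
    -- CCS representation of X
    (his_mono : ∀ j k, 1 ≤ j → j ≤ k → k ≤ m + 1 → is j ≤ is k)
    (his1 : is 1 = 1) (hism : is (m + 1) = ν + 1)
    (hs_inj : ∀ j, 1 ≤ j → j ≤ m → ∀ k l, is j ≤ k → k < is (j + 1) →
      is j ≤ l → l < is (j + 1) → s k = s l → k = l)
    (hs_im : ∀ j, 1 ≤ j → j ≤ m → ∀ i,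
      ((∃ k, is j ≤ k ∧ k < is (j + 1) ∧ s k = i) ↔ (1 ≤ i ∧ i ≤ n ∧ X i j = true)))
    -- CCS representation of Xᵀ
    (hiz_mono : ∀ i k, 1 ≤ i → i ≤ k → k ≤ n + 1 → iz i ≤ iz k)
    (hiz1 : iz 1 = 1) (hizn : iz (n + 1) = ν + 1)
    (hz_inj : ∀ i, 1 ≤ i → i ≤ n → ∀ k l, iz i ≤ k → k < iz (i + 1) →
      iz i ≤ l → l < iz (i + 1) → z k = z l → k = l)
    (hz_im : ∀ i, 1 ≤ i → i ≤ n → ∀ j,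
      ((∃ k, iz i ≤ k ∧ k < iz (i + 1) ∧ z k = j) ↔ (1 ≤ j ∧ j ≤ m ∧ X i j = true))) :
    ∃ st zt : ℕ → ℕ,
      -- s̃ : each value is an index of the corresponding row, compatible with columns
      ((∀ k, 1 ≤ k → k ≤ ν → iz (s k) ≤ st k ∧ st k < iz (s k + 1)) ∧
       (∀ l j, 1 ≤ j → j ≤ m → is j ≤ l → l < is (j + 1) → z (st l) = j)) ∧
      -- z̃ : each value is an index of the corresponding column, compatible with rows
      ((∀ l, 1 ≤ l → l ≤ ν → is (z l) ≤ zt l ∧ zt l < is (z l + 1)) ∧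
       (∀ k i, 1 ≤ i → i ≤ n → iz i ≤ k → k < iz (i + 1) → s (zt k) = i)) ∧
      -- mutually inverse permutations of [1;ν]
      ((∀ k, 1 ≤ k → k ≤ ν → 1 ≤ st k ∧ st k ≤ ν ∧ 1 ≤ zt k ∧ zt k ≤ ν) ∧
       (∀ k, 1 ≤ k → k ≤ ν → zt (st k) = k ∧ st (zt k) = k)) ∧
      -- uniqueness on [1;ν]
      (∀ st' zt' : ℕ → ℕ,
        ((∀ k, 1 ≤ k → k ≤ ν → iz (s k) ≤ st' k ∧ st' k < iz (s k + 1)) ∧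
         (∀ l j, 1 ≤ j → j ≤ m → is j ≤ l → l < is (j + 1) → z (st' l) = j)) →
        ((∀ l, 1 ≤ l → l ≤ ν → is (z l) ≤ zt' l ∧ zt' l < is (z l + 1)) ∧
         (∀ k i, 1 ≤ i → i ≤ n → iz i ≤ k → k < iz (i + 1) → s (zt' k) = i)) →
        ∀ k, 1 ≤ k → k ≤ ν → st' k = st k ∧ zt' k = zt k) := by
  classical
  -- column of each index l, row of each index k
  have hcol' : ∀ l, ∃ j, 1 ≤ l → l ≤ ν →
      1 ≤ j ∧ j ≤ m ∧ is j ≤ l ∧ l < is (j + 1) := by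
    intro l
    by_cases h : 1 ≤ l ∧ l ≤ ν
    · obtain ⟨j, hj⟩ := ccs_interval_exists is m ν his_mono his1 hism l h.1 h.2
      exact ⟨j, fun _ _ => hj⟩
    · exact ⟨0, fun h1 h2 => absurd ⟨h1, h2⟩ h⟩
  choose col hcol using hcol'
  have hrow' : ∀ k, ∃ i, 1 ≤ k → k ≤ ν →
      1 ≤ i ∧ i ≤ n ∧ iz i ≤ k ∧ k < iz (i + 1) := by
    intro k
    by_cases h : 1 ≤ k ∧ k ≤ ν
    · obtain ⟨i, hi⟩ := ccs_interval_exists iz n ν hiz_mono hiz1 hizn k h.1 h.2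
      exact ⟨i, fun _ _ => hi⟩
    · exact ⟨0, fun h1 h2 => absurd ⟨h1, h2⟩ h⟩
  choose row hrow using hrow'
  -- bounds derived from interval membership
  have hl_bounds : ∀ l j, 1 ≤ j → j ≤ m → is j ≤ l → l < is (j + 1) →
      1 ≤ l ∧ l ≤ ν := by
    intro l j hj1 hjm h1 h2
    have ha : is 1 ≤ is j := his_mono 1 j le_rfl hj1 (by omega)
    have hb : is (j + 1) ≤ is (m + 1) := his_mono (j + 1) (m + 1) (by omega) (by omega) le_rfl
    rw [his1] at ha; rw [hism] at hb; omega
  have hk_bounds : ∀ k i, 1 ≤ i → i ≤ n → iz i ≤ k → k < iz (i + 1) →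
      1 ≤ k ∧ k ≤ ν := by
    intro k i hi1 hin h1 h2
    have ha : iz 1 ≤ iz i := hiz_mono 1 i le_rfl hi1 (by omega)
    have hb : iz (i + 1) ≤ iz (n + 1) := hiz_mono (i + 1) (n + 1) (by omega) (by omega) le_rfl
    rw [hiz1] at ha; rw [hizn] at hb; omega
  -- each s l is a valid row with a star in column `col l`
  have hsX : ∀ l, 1 ≤ l → l ≤ ν → 1 ≤ s l ∧ s l ≤ n ∧ X (s l) (col l) = true := by
    intro l h1 h2
    obtain ⟨hc1, hc2, hc3, hc4⟩ := hcol l h1 h2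
    exact (hs_im (col l) hc1 hc2 (s l)).mp ⟨l, hc3, hc4, rfl⟩
  have hzX : ∀ k, 1 ≤ k → k ≤ ν → 1 ≤ z k ∧ z k ≤ m ∧ X (row k) (z k) = true := by
    intro k h1 h2
    obtain ⟨hr1, hr2, hr3, hr4⟩ := hrow k h1 h2
    exact (hz_im (row k) hr1 hr2 (z k)).mp ⟨k, hr3, hr4, rfl⟩
  -- define st
  have hst' : ∀ l, ∃ k, 1 ≤ l → l ≤ ν →
      iz (s l) ≤ k ∧ k < iz (s l + 1) ∧ z k = col l := by
    intro l
    by_cases h : 1 ≤ l ∧ l ≤ ν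
    · obtain ⟨hs1, hs2, hs3⟩ := hsX l h.1 h.2
      obtain ⟨hc1, hc2, _, _⟩ := hcol l h.1 h.2
      obtain ⟨k, hk⟩ := (hz_im (s l) hs1 hs2 (col l)).mpr ⟨hc1, hc2, hs3⟩
      exact ⟨k, fun _ _ => hk⟩
    · exact ⟨0, fun h1 h2 => absurd ⟨h1, h2⟩ h⟩
  choose st hst using hst'
  -- define zt
  have hzt' : ∀ k, ∃ l, 1 ≤ k → k ≤ ν →
      is (z k) ≤ l ∧ l < is (z k + 1) ∧ s l = row k := by
    intro k
    by_cases h : 1 ≤ k ∧ k ≤ ν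
    · obtain ⟨hz1, hz2, hz3⟩ := hzX k h.1 h.2
      obtain ⟨hr1, hr2, _, _⟩ := hrow k h.1 h.2
      obtain ⟨l, hl⟩ := (hs_im (z k) hz1 hz2 (row k)).mpr ⟨hr1, hr2, hz3⟩
      exact ⟨l, fun _ _ => hl⟩
    · exact ⟨0, fun h1 h2 => absurd ⟨h1, h2⟩ h⟩
  choose zt hzt using hzt'
  -- bounds of st / zt
  have hstb : ∀ k, 1 ≤ k → k ≤ ν → 1 ≤ st k ∧ st k ≤ ν := by
    intro k h1 h2
    obtain ⟨hs1, hs2, _⟩ := hsX k h1 h2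
    obtain ⟨ha, hb, _⟩ := hst k h1 h2
    exact hk_bounds (st k) (s k) hs1 hs2 ha hb
  have hztb : ∀ k, 1 ≤ k → k ≤ ν → 1 ≤ zt k ∧ zt k ≤ ν := by
    intro k h1 h2
    obtain ⟨hz1, hz2, _⟩ := hzX k h1 h2
    obtain ⟨ha, hb, _⟩ := hzt k h1 h2
    exact hl_bounds (zt k) (z k) hz1 hz2 ha hb
  -- column compatibility of st, row compatibility of zt
  have hstcomp : ∀ l j, 1 ≤ j → j ≤ m → is j ≤ l → l < is (j + 1) → z (st l) = j := by
    intro l j hj1 hjm h1 h2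
    obtain ⟨hl1, hl2⟩ := hl_bounds l j hj1 hjm h1 h2
    obtain ⟨hc1, hc2, hc3, hc4⟩ := hcol l hl1 hl2
    have : col l = j := ccs_interval_unique is m his_mono hc1 hc2 hc3 hc4 hj1 hjm h1 h2
    rw [← this]; exact (hst l hl1 hl2).2.2
  have hztcomp : ∀ k i, 1 ≤ i → i ≤ n → iz i ≤ k → k < iz (i + 1) → s (zt k) = i := by
    intro k i hi1 hin h1 h2
    obtain ⟨hk1, hk2⟩ := hk_bounds k i hi1 hin h1 h2
    obtain ⟨hr1, hr2, hr3, hr4⟩ := hrow k hk1 hk2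
    have : row k = i := ccs_interval_unique iz n hiz_mono hr1 hr2 hr3 hr4 hi1 hin h1 h2
    rw [← this]; exact (hzt k hk1 hk2).2.2
  -- inverses
  have hinv1 : ∀ l, 1 ≤ l → l ≤ ν → zt (st l) = l := by
    intro l h1 h2
    obtain ⟨hs1, hs2, _⟩ := hsX l h1 h2
    obtain ⟨ha, hb, hc⟩ := hst l h1 h2
    obtain ⟨hk1, hk2⟩ := hstb l h1 h2
    -- row (st l) = s l
    obtain ⟨hr1, hr2, hr3, hr4⟩ := hrow (st l) hk1 hk2
    have hrowst : row (st l) = s l :=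
      ccs_interval_unique iz n hiz_mono hr1 hr2 hr3 hr4 hs1 hs2 ha hb
    obtain ⟨hc1, hc2, hc3, hc4⟩ := hcol l h1 h2
    obtain ⟨hz1, hz2, hz3⟩ := hzt (st l) hk1 hk2
    rw [hc] at hz1 hz2
    rw [hrowst] at hz3
    exact hs_inj (col l) hc1 hc2 (zt (st l)) l hz1 hz2 hc3 hc4 hz3
  have hinv2 : ∀ k, 1 ≤ k → k ≤ ν → st (zt k) = k := by
    intro k h1 h2
    obtain ⟨hz1, hz2, _⟩ := hzX k h1 h2
    obtain ⟨ha, hb, hc⟩ := hzt k h1 h2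
    obtain ⟨hl1, hl2⟩ := hztb k h1 h2
    obtain ⟨hc1, hc2, hc3, hc4⟩ := hcol (zt k) hl1 hl2
    have hcolzt : col (zt k) = z k :=
      ccs_interval_unique is m his_mono hc1 hc2 hc3 hc4 hz1 hz2 ha hb
    obtain ⟨hr1, hr2, hr3, hr4⟩ := hrow k h1 h2
    obtain ⟨hs1', hs2', hs3'⟩ := hst (zt k) hl1 hl2
    rw [hc] at hs1' hs2'
    rw [hcolzt] at hs3'
    exact hz_inj (row k) hr1 hr2 (st (zt k)) k hs1' hs2' hr3 hr4 hs3'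
  refine ⟨st, zt, ⟨fun k h1 h2 => ⟨(hst k h1 h2).1, (hst k h1 h2).2.1⟩, hstcomp⟩,
    ⟨fun l h1 h2 => ⟨(hzt l h1 h2).1, (hzt l h1 h2).2.1⟩, hztcomp⟩,
    ⟨fun k h1 h2 => ⟨(hstb k h1 h2).1, (hstb k h1 h2).2, (hztb k h1 h2).1, (hztb k h1 h2).2⟩,
      fun k h1 h2 => ⟨hinv1 k h1 h2, hinv2 k h1 h2⟩⟩, ?_⟩
  -- uniqueness
  rintro st' zt' ⟨hst'1, hst'2⟩ ⟨hzt'1, hzt'2⟩ k h1 h2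
  constructor
  · obtain ⟨hs1, hs2, _⟩ := hsX k h1 h2
    obtain ⟨hc1, hc2, hc3, hc4⟩ := hcol k h1 h2
    obtain ⟨ha, hb, hc⟩ := hst k h1 h2
    obtain ⟨ha', hb'⟩ := hst'1 k h1 h2
    have hz' : z (st' k) = col k := hst'2 k (col k) hc1 hc2 hc3 hc4
    exact hz_inj (s k) hs1 hs2 (st' k) (st k) ha' hb' ha hb (by rw [hz', hc])
  · obtain ⟨hz1, hz2, _⟩ := hzX k h1 h2
    obtain ⟨hr1, hr2, hr3, hr4⟩ := hrow k h1 h2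
    obtain ⟨ha, hb, hc⟩ := hzt k h1 h2
    obtain ⟨ha', hb'⟩ := hzt'1 k h1 h2
    have hs' : s (zt' k) = row k := hzt'2 k (row k) hr1 hr2 hr3 hr4
    exact hs_inj (z k) hz1 hz2 (zt' k) (zt k) ha' hb' ha hb (by rw [hs', hc])
end

section
/- Let λ ∈ ℂ, λ ≠ 0 and λ' ∈ ℂ, λ' ≠ 0. Then the pair (𝒜, ℬ) of structural matrices is strong structurally controllable for λ if and only if it is strong structurally controllable for λ'. -/
/-!
Multiplying `(λ'I - A, B)` by `c = λ / λ'` gives `(λI - cA, cB)`: this preserves the rank, and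
`(cA, cB)` has the same non-zero structure as `(A, B)`. So every witness of a rank drop at `λ'`
yields one at `λ`, and conversely.
-/

open Matrix

section

variable {K : Type*} [Field K]

def HasNonzeroStructure {p q : Type*} (A : Matrix p q K) (𝒜 : Matrix p q Bool) : Prop :=
  ∀ i j, A i j ≠ 0 ↔ 𝒜 i j = true

theorem HasNonzeroStructure.smul {p q : Type*} {A : Matrix p q K} {𝒜 : Matrix p q Bool}
    (h : HasNonzeroStructure A 𝒜) {c : K} (hc : c ≠ 0) : HasNonzeroStructure (c • A) 𝒜 :=
  fun i j => by rw [← h i j, Matrix.smul_apply, smul_eq_mul, mul_ne_zero_iff, and_iff_right hc]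

variable {m r : Type*} [Fintype m] [DecidableEq m] [Fintype r]

def IsStrongStructurallyControllable (𝒜 : Matrix m m Bool) (ℬ : Matrix m r Bool) (lam : K) :
    Prop :=
  ∀ (A : Matrix m m K) (B : Matrix m r K),
    HasNonzeroStructure A 𝒜 → HasNonzeroStructure B ℬ →
    (fromCols (lam • 1 - A) B).rank = Fintype.card m

theorem rank_fromCols_mul_smul_sub_smul (A : Matrix m m K) (B : Matrix m r K) (lam : K)
    {c : K} (hc : c ≠ 0) :
    (fromCols ((c * lam) • 1 - c • A) (c • B)).rank = (fromCols (lam • 1 - A) B).rank := by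
  have hscale : fromCols ((c * lam) • 1 - c • A) (c • B) = c • fromCols (lam • 1 - A) B := by
    rw [mul_smul, ← smul_sub]
    ext i (j | j) <;> rfl
  rw [hscale, rank_smul_of_mem_nonZeroDivisors _ (mem_nonZeroDivisors_of_ne_zero hc)]

theorem IsStrongStructurallyControllable.of_ne_zero
    {𝒜 : Matrix m m Bool} {ℬ : Matrix m r Bool} {lam lam' : K}
    (h : IsStrongStructurallyControllable 𝒜 ℬ lam) (hlam : lam ≠ 0) (hlam' : lam' ≠ 0) : IsStrongStructurallyControllable 𝒜 ℬ lam' := by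
  intro A B hA hB
  set c := lam / lam'
  have hc : c ≠ 0 := div_ne_zero hlam hlam'
  rw [← rank_fromCols_mul_smul_sub_smul A B lam' hc, div_mul_cancel₀ lam hlam']
  exact h _ _ (hA.smul hc) (hB.smul hc)

end

/-- For nonzero `λ` and `λ'`, the structural pair `(𝒜, ℬ)` is strong
structurally controllable for `λ` iff it is for `λ'`. -/
theorem ssc_lambda_iff (n r : ℕ)
    (𝒜 : Matrix (Fin n) (Fin n) Bool) (ℬ : Matrix (Fin n) (Fin r) Bool)
    (lam lam' : ℂ) (hlam : lam ≠ 0) (hlam' : lam' ≠ 0) :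
    ((∀ (A : Matrix (Fin n) (Fin n) ℂ) (B : Matrix (Fin n) (Fin r) ℂ),
        (∀ i j, A i j ≠ 0 ↔ 𝒜 i j = true) →
        (∀ i j, B i j ≠ 0 ↔ ℬ i j = true) →
        (Matrix.of (fun i (v : Fin n ⊕ Fin r) =>
          Sum.elim (fun j => (lam • (1 : Matrix (Fin n) (Fin n) ℂ) - A) i j)
                   (fun j => B i j) v)).rank = n)
      ↔
     (∀ (A : Matrix (Fin n) (Fin n) ℂ) (B : Matrix (Fin n) (Fin r) ℂ),
        (∀ i j, A i j ≠ 0 ↔ 𝒜 i j = true) →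
        (∀ i j, B i j ≠ 0 ↔ ℬ i j = true) →
        (Matrix.of (fun i (v : Fin n ⊕ Fin r) =>
          Sum.elim (fun j => (lam' • (1 : Matrix (Fin n) (Fin n) ℂ) - A) i j)
                   (fun j => B i j) v)).rank = n)) := by
  have key :
      IsStrongStructurallyControllable 𝒜 ℬ lam ↔ IsStrongStructurallyControllable 𝒜 ℬ lam' :=
    ⟨(·.of_ne_zero hlam hlam'), (·.of_ne_zero hlam' hlam)⟩
  simp only [IsStrongStructurallyControllable, HasNonzeroStructure, Fintype.card_fin] at key
  exact key
end

section
/- Condition (G₀) holds for X = (𝒜, ℬ) if X = (𝒜, ℬ) is strong structurally controllable for λ = 0. That is: if for all (A,B) ∈ ℂ^{n×(n+n)} with the non-zero structure of (𝒜,ℬ) the matrix (−A, B) has rank n, then for every non-empty subset V ⊆ [1;n] of row indices there exists a column index v ∈ [1; n+r] such that V ∩ NZR(v) is a singleton. -/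
open Matrix Finset

/-!
If a non-empty set `V` of rows met every column of the pattern in either no row or at least two
rows, the pattern would have a realization whose rows indexed by `V` sum to zero: in a column
meeting `V` in `k ≥ 2` rows, put `1 - k` on one of them and `1` on the other `k - 1` (the entry
`1 - k` is non-zero precisely because `k ≠ 1`). Such a realization of `(-A, B)` has linearly
dependent rows, hence rank less than `n`.
-/

theorem Matrix.rank_lt_card_height_of_sum_rows_eq_zero {m n R : Type*} [Field R] [Fintype m]
    [Fintype n] {M : Matrix m n R} {V : Finset m} (hV : V.Nonempty)
    (hsum : ∀ j, ∑ i ∈ V, M i j = 0) :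
    M.rank < Fintype.card m := by
  obtain ⟨i, hi⟩ := hV
  refine M.rank_le_card_height.lt_of_ne fun hM => one_ne_zero (α := R) ?_
  have hrows : LinearIndependent R M.row := by
    rw [linearIndependent_iff_card_eq_finrank_span, Set.finrank, ← rank_eq_finrank_span_row, hM]
  have hdep : ∑ i ∈ V, (1 : m → R) i • M.row i = 0 :=
    funext fun j => by simpa [row, Finset.sum_apply (g := fun i => M i)] using hsum j
  exact linearIndependent_iff'.mp hrows V 1 hdep i hi

theorem Finset.exists_support_eq_sum_eq_zero {α K : Type*} [Ring K] [CharZero K]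
    (s : Finset α) (hs : #s ≠ 1) :
    ∃ f : α → K, (∀ i, f i ≠ 0 ↔ i ∈ s) ∧ ∑ i ∈ s, f i = 0 := by
  classical
  obtain rfl | ⟨a, ha⟩ := s.eq_empty_or_nonempty
  · exact ⟨0, by simp, by simp⟩
  refine ⟨fun i => (if i ∈ s then 1 else 0) - if i = a then (#s : K) else 0, fun i => ?_, ?_⟩
  · by_cases hia : i = a
    · simp only [hia, ha, if_true, iff_true]
      exact sub_ne_zero.mpr (by exact_mod_cast hs.symm)
    · simp [hia]
  · simp [sum_sub_distrib, sum_ite_mem, ha]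

theorem Matrix.exists_realization_sum_rows_eq_zero {ι κ K : Type*} [Ring K] [CharZero K]
    (X : Matrix ι κ Bool) (V : Finset ι) (hV : ∀ j, #{i ∈ V | X i j = true} ≠ 1) :
    ∃ M : Matrix ι κ K, (∀ i j, M i j ≠ 0 ↔ X i j = true) ∧ ∀ j, ∑ i ∈ V, M i j = 0 := by
  classical
  choose f hf_supp hf_sum using fun j => exists_support_eq_sum_eq_zero (K := K) _ (hV j)
  refine ⟨of fun i j => if i ∈ V then f j i else if X i j then 1 else 0, fun i j => ?_, ?_⟩
  · by_cases hi : i ∈ V <;> simp [hi, hf_supp]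
  · intro j
    rw [← hf_sum j, sum_filter_of_ne fun i _ h => (mem_filter.mp ((hf_supp j i).mp h)).2]
    exact sum_congr rfl fun i hi => by simp [hi]

/-- If `(𝒜, ℬ)` is strong structurally controllable for `λ = 0` (every
realization `(−A, B)` has rank `n`), then condition (G₀) holds: every
non-empty set `V` of row indices admits a column `v` with `V ∩ NZR(v)` a
singleton. -/
theorem G0_of_ssc_zero (n r : ℕ)
    (𝒜 : Matrix (Fin n) (Fin n) Bool) (ℬ : Matrix (Fin n) (Fin r) Bool)
    (hssc : ∀ (A : Matrix (Fin n) (Fin n) ℂ) (B : Matrix (Fin n) (Fin r) ℂ),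
      (∀ i j, A i j ≠ 0 ↔ 𝒜 i j = true) →
      (∀ i j, B i j ≠ 0 ↔ ℬ i j = true) →
      (Matrix.of (fun i (v : Fin n ⊕ Fin r) =>
        Sum.elim (fun j => (-A) i j) (fun j => B i j) v)).rank = n) :
    ∀ V : Finset (Fin n), V.Nonempty →
      ∃ v : Fin n ⊕ Fin r,
        (V.filter (fun i => Sum.elim (𝒜 i) (ℬ i) v = true)).card = 1 := by
  intro V hV
  by_contra! hG0
  obtain ⟨M, hM_supp, hM_sum⟩ :=
    exists_realization_sum_rows_eq_zero (K := ℂ) (fromCols 𝒜 ℬ) V hG0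
  have hrank := hssc (-toCols₁ M) (toCols₂ M) (by simpa using fun i j => hM_supp i (.inl j))
    (fun i j => hM_supp i (.inr j))
  have hM : of (fun i v => Sum.elim (fun j => (- -toCols₁ M) i j) (toCols₂ M i) v) = M := by
    ext i (j | j) <;> simp
  rw [hM] at hrank
  simpa [hrank] using rank_lt_card_height_of_sum_rows_eq_zero hV hM_sum
end

section
/- If for some non-empty subset V ⊆ [1;n] there is no column v ∈ [1; n+r] with |V ∩ NZR(v)| = 1, then there exists a matrix M ∈ ℝ^{n×(n+r)} with the non-zero structure of X = (𝒜,ℬ) whose rows indexed by V are linearly dependent; in particular M does not have full row rank. -/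
/-! A column meets `V` in either no entry or at least two, so its entries in the rows of `V` can be
chosen nonzero and summing to zero (`1, …, 1, 1 - k` for `k ≠ 1` entries). The rows of `V` then
add up to zero, which is a nontrivial dependence among them and rules out full row rank. -/

open Matrix Finset

theorem Finset.exists_forall_ne_zero_sum_eq_zero {ι R : Type*} [DecidableEq ι] [Ring R]
    [CharZero R] {s : Finset ι} (hs : #s ≠ 1) :
    ∃ f : ι → R, (∀ i, f i ≠ 0) ∧ ∑ i ∈ s, f i = 0 := by
  rcases s.eq_empty_or_nonempty with rfl | ⟨i₀, hi₀⟩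
  · exact ⟨1, fun _ => one_ne_zero, sum_empty⟩
  refine ⟨fun i => 1 - if i = i₀ then (#s : R) else 0, fun i => ?_, ?_⟩
  · dsimp only
    split_ifs
    · rw [sub_ne_zero, ne_comm]
      exact_mod_cast hs
    · simp
  · simp [sum_sub_distrib, hi₀]

theorem Matrix.exists_sum_row_eq_zero_of_pattern {m n R : Type*} [DecidableEq m] [Ring R]
    [CharZero R] (X : Matrix m n Bool) (V : Finset m)
    (hV : ∀ j, #(V.filter (fun i => X i j = true)) ≠ 1) :
    ∃ M : Matrix m n R, (∀ i j, M i j ≠ 0 ↔ X i j = true) ∧ ∑ i ∈ V, M i = 0 := by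
  choose f hf_ne hf_sum using fun j => exists_forall_ne_zero_sum_eq_zero (R := R) (hV j)
  refine ⟨fun i j => if X i j = true then f j i else 0, fun i j => ?_, ?_⟩
  · by_cases hX : X i j = true <;> simp [hX, hf_ne]
  · ext j
    simpa [Finset.sum_apply, sum_filter] using hf_sum j

theorem Finset.not_linearIndependent_of_sum_eq_zero {ι R M : Type*} [Ring R] [Nontrivial R]
    [AddCommGroup M] [Module R M] {v : ι → M} {V : Finset ι} (hV : V.Nonempty)
    (h : ∑ i ∈ V, v i = 0) : ¬LinearIndependent R (fun i : V => v i) := by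
  rw [Fintype.not_linearIndependent_iff]
  obtain ⟨i, hi⟩ := hV
  refine ⟨1, ?_, ⟨i, hi⟩, one_ne_zero⟩
  simpa only [Pi.one_apply, one_smul, sum_coe_sort V v] using h

theorem Matrix.linearIndependent_row_of_rank_eq_card {m n R : Type*} [Fintype m] [Fintype n]
    [Field R] {M : Matrix m n R} (h : M.rank = Fintype.card m) : LinearIndependent R M.row := by
  rw [linearIndependent_iff_card_eq_finrank_span, Set.finrank, ← rank_eq_finrank_span_row, h]

/-- If some non-empty `V ⊆ [1;n]` admits no column `v` with
`|V ∩ NZR(v)| = 1`, then there is a real matrix `M` with the non-zero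
structure of `X = (𝒜,ℬ)` whose rows indexed by `V` are linearly dependent;
in particular `M` does not have full row rank. -/
theorem dependent_realization_of_G0_failure (n r : ℕ)
    (X : Matrix (Fin n) (Fin (n + r)) Bool)
    (V : Finset (Fin n)) (hV : V.Nonempty)
    (hfail : ∀ v : Fin (n + r), (V.filter (fun i => X i v = true)).card ≠ 1) :
    ∃ M : Matrix (Fin n) (Fin (n + r)) ℝ,
      (∀ i j, M i j ≠ 0 ↔ X i j = true) ∧
      ¬ LinearIndependent ℝ (fun i : {i // i ∈ V} => M i.1) ∧
      M.rank ≠ n := by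
  obtain ⟨M, hM, hsum⟩ := exists_sum_row_eq_zero_of_pattern (R := ℝ) X V hfail
  have hdep := not_linearIndependent_of_sum_eq_zero (R := ℝ) hV hsum
  refine ⟨M, hM, hdep, fun hrank => hdep ?_⟩
  have hrows := linearIndependent_row_of_rank_eq_card (M := M) (by rw [hrank, Fintype.card_fin])
  exact hrows.comp Subtype.val Subtype.val_injective
end

section
/- Suppose X ∈ {0,*}^{n×m} satisfies: for every non-empty subset V ⊆ [1;n] there exists a column v with |V ∩ NZR(v)| = 1. Then every matrix M ∈ ℝ^{n×m} with the non-zero structure of X has full row rank n. -/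
open Matrix Finset

/-! If a nontrivial combination `∑ lᵢ • Mᵢ` of rows vanished, take `s` to be the support of `l`
and a column `j` in which exactly one row `i₀ ∈ s` is non-zero: the `j`-th entry of the
combination is then `l i₀ * M i₀ j ≠ 0`. -/

theorem Matrix.linearIndependent_row_of_exists_unique_ne_zero {ι κ R : Type*} [Ring R]
    [NoZeroDivisors R] (M : Matrix ι κ R)
    (h : ∀ s : Finset ι, s.Nonempty → ∃ j, ∃! i, i ∈ s ∧ M i j ≠ 0) :
    LinearIndependent R M.row := by
  rw [linearIndependent_iff]
  intro l hl
  by_contra hl_ne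
  obtain ⟨j, i₀, ⟨hi₀, hMi₀⟩, huniq⟩ := h l.support (Finsupp.support_nonempty_iff.2 hl_ne)
  have hentry : ∑ i ∈ l.support, l i * M i j = l i₀ * M i₀ j := by
    refine sum_eq_single_of_mem i₀ hi₀ fun i hi hne => ?_
    by_contra hprod
    exact hne (huniq i ⟨hi, right_ne_zero_of_mul hprod⟩)
  have hzero : ∑ i ∈ l.support, l i * M i j = 0 := by
    simpa [Finsupp.linearCombination_apply, Finsupp.sum] using congrFun hl j
  exact mul_ne_zero (Finsupp.mem_support_iff.1 hi₀) hMi₀ (hentry ▸ hzero)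

/-- If `X` satisfies (G₀) — every non-empty `V` admits a column `v` with
`|V ∩ NZR(v)| = 1` — then every real matrix with the non-zero structure of
`X` has full row rank `n`. -/
theorem full_rank_of_G0 (n m : ℕ) (X : Matrix (Fin n) (Fin m) Bool)
    (hG0 : ∀ V : Finset (Fin n), V.Nonempty →
      ∃ v : Fin m, (V.filter (fun i => X i v = true)).card = 1) :
    ∀ M : Matrix (Fin n) (Fin m) ℝ,
      (∀ i j, M i j ≠ 0 ↔ X i j = true) → M.rank = n := by
  intro M hM
  suffices LinearIndependent ℝ M.row by simpa using this.rank_matrix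
  refine M.linearIndependent_row_of_exists_unique_ne_zero fun V hV => ?_
  obtain ⟨v, hv⟩ := hG0 V hV
  obtain ⟨i₀, hi₀⟩ := card_eq_one.1 hv
  have hsupp (i : Fin n) : i ∈ V ∧ M i v ≠ 0 ↔ i = i₀ := by
    simpa [hM] using congr(i ∈ $hi₀)
  exact ⟨v, i₀, (hsupp i₀).2 rfl, fun i hi => (hsupp i).1 hi⟩
end

section
/- Conversely, if there exists an ordering w₁, …, w_n of [1;n] such that for each t, with V_t = {w_t, …, w_n}, some column v_t satisfies V_t ∩ NZR(v_t) = {w_t}, then X satisfies condition (G₀): every non-empty V ⊆ [1;n] admits a column v with |V ∩ NZR(v)| = 1. -/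
open Matrix Finset

/-- If there is an ordering `w₁, …, w_n` of the rows such that for each `t`,
with `V_t = {w_t, …, w_n}`, some column `v_t` satisfies
`V_t ∩ NZR(v_t) = {w_t}`, then `X` satisfies (G₀). -/
theorem G0_of_elimination_ordering (n m : ℕ) (X : Matrix (Fin n) (Fin m) Bool)
    (w : Fin n → Fin n) (hw : Function.Bijective w)
    (helim : ∀ t : Fin n, ∃ v : Fin m,
      ((Finset.Ici t).image w).filter (fun i => X i v = true) = {w t}) :
    ∀ V : Finset (Fin n), V.Nonempty →
      ∃ v : Fin m, (V.filter (fun i => X i v = true)).card = 1 := by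
  intro V hV
  set T : Finset (Fin n) := Finset.univ.filter (fun t => w t ∈ V) with hT
  have hTne : T.Nonempty := by
    obtain ⟨i, hi⟩ := hV
    obtain ⟨t, ht⟩ := hw.2 i
    exact ⟨t, by simp [hT, ht, hi]⟩
  set t := T.min' hTne with htdef
  obtain ⟨v, hv⟩ := helim t
  refine ⟨v, ?_⟩
  have hwtV : w t ∈ V := by
    have := T.min'_mem hTne
    simpa [hT] using this
  have hsub : V.filter (fun i => X i v = true) ⊆ {w t} := by
    intro i hi
    rw [Finset.mem_filter] at hi
    obtain ⟨s, hs⟩ := hw.2 i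
    have hsT : s ∈ T := by simp [hT, hs, hi.1]
    have hts : t ≤ s := T.min'_le s hsT
    have : i ∈ ((Finset.Ici t).image w).filter (fun i => X i v = true) := by
      rw [Finset.mem_filter]
      exact ⟨Finset.mem_image.mpr ⟨s, Finset.mem_Ici.mpr hts, hs⟩, hi.2⟩
    rwa [hv] at this
  have hXwt : X (w t) v = true := by
    have : w t ∈ ((Finset.Ici t).image w).filter (fun i => X i v = true) := by
      rw [hv]; simp
    exact (Finset.mem_filter.mp this).2
  have heq : V.filter (fun i => X i v = true) = {w t} := by
    refine Finset.Subset.antisymm hsub ?_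
    intro i hi
    rw [Finset.mem_singleton] at hi
    subst hi
    exact Finset.mem_filter.mpr ⟨hwtV, hXwt⟩
  rw [heq, Finset.card_singleton]
end

section
/- Let V ⊆ [1;n] be the set represented by (s, c) in the sense that V ∩ NZR(v) = {s(k) : i_s(v) ≤ k < i_s(v) + c(v)} for all columns v, where c(v) = |V ∩ NZR(v)|. Let w ∈ [1;n] and suppose w ∈ NZR(j) with c(j) ≥ 1, and let j̃ be the position with i_s(j) ≤ j̃ < i_s(j) + c(j) and s(j̃) = w. Define s' by swapping the entries of s at positions j̃ and i_s(j) + c(j) − 1, and c' by decrementing c(j) by 1 (leaving other entries unchanged). Then (s', c') represents (V \ {w}) ∩ NZR(·) in the same sense at column j, i.e., (V \ {w}) ∩ NZR(j) = {s'(k) : i_s(j) ≤ k < i_s(j) + c'(j)}, and s' is still a CCS row-index array for X. -/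
/-- Correctness of the removal procedure: if `(s, c)` represents the sets
`V ∩ NZR(·)` and `w ∈ V ∩ NZR(j)` sits at position `j̃` of the active block of
column `j`, then after swapping positions `j̃` and `is j + c j − 1` in `s` and
decrementing `c j`, the new pair represents `(V \ {w}) ∩ NZR(j)` at column `j`,
and the swapped array is still a CCS row-index array for `X`. -/
theorem remove_from_representation (n m ν : ℕ) (hν : 0 < ν)
    (X : ℕ → ℕ → Bool) (s is : ℕ → ℕ) (c : ℕ → ℕ)
    -- CCS representation of X
    (his_mono : ∀ j k, 1 ≤ j → j ≤ k → k ≤ m + 1 → is j ≤ is k)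
    (his1 : is 1 = 1) (hism : is (m + 1) = ν + 1)
    (hs_inj : ∀ v, 1 ≤ v → v ≤ m → ∀ k l, is v ≤ k → k < is (v + 1) →
      is v ≤ l → l < is (v + 1) → s k = s l → k = l)
    (hs_im : ∀ v, 1 ≤ v → v ≤ m → ∀ i,
      ((∃ k, is v ≤ k ∧ k < is (v + 1) ∧ s k = i) ↔ (1 ≤ i ∧ i ≤ n ∧ X i v = true)))
    -- the represented subset V ⊆ [1;n]
    (V : Set ℕ) (hVsub : ∀ i ∈ V, 1 ≤ i ∧ i ≤ n)
    (hc_le : ∀ v, 1 ≤ v → v ≤ m → is v + c v ≤ is (v + 1))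
    (hrep : ∀ v, 1 ≤ v → v ≤ m → ∀ i,
      ((i ∈ V ∧ X i v = true) ↔ ∃ k, is v ≤ k ∧ k < is v + c v ∧ s k = i))
    -- the element to be removed and its position
    (w j : ℕ) (hj : 1 ≤ j ∧ j ≤ m) (hwV : w ∈ V) (hwj : X w j = true)
    (hcj : 1 ≤ c j)
    (jt : ℕ) (hjt : is j ≤ jt ∧ jt < is j + c j ∧ s jt = w)
    -- the updated arrays: swap and decrement
    (s' c' : ℕ → ℕ)
    (hs' : ∀ k, s' k = if k = jt then s (is j + c j - 1)
                       else if k = is j + c j - 1 then s jt else s k)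
    (hc' : ∀ v, c' v = if v = j then c j - 1 else c v) :
    -- (V \ {w}) ∩ NZR(j) is represented by (s', c') at column j
    (∀ i, ((i ∈ V ∧ i ≠ w ∧ X i j = true) ↔
        ∃ k, is j ≤ k ∧ k < is j + c' j ∧ s' k = i)) ∧
    -- s' is still a CCS row-index array for X
    (∀ v, 1 ≤ v → v ≤ m → ∀ k l, is v ≤ k → k < is (v + 1) →
      is v ≤ l → l < is (v + 1) → s' k = s' l → k = l) ∧
    (∀ v, 1 ≤ v → v ≤ m → ∀ i,
      ((∃ k, is v ≤ k ∧ k < is (v + 1) ∧ s' k = i) ↔ (1 ≤ i ∧ i ≤ n ∧ X i v = true))) := by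

  obtain ⟨hj1, hjm⟩ := hj
  obtain ⟨hjt1, hjt2, hjtw⟩ := hjt
  have hblt : is j + c j ≤ is (j+1) := hc_le j hj1 hjm
  have hjtlt : jt < is (j+1) := by omega
  set p := is j + c j - 1 with hp
  have hjp : is j ≤ p := by omega
  have hplt : p < is (j+1) := by omega
  set σ : ℕ → ℕ := fun k => if k = jt then p else if k = p then jt else k with hσ
  have hs'σ : ∀ k, s' k = s (σ k) := by
    intro k; rw [hs' k]; simp only [hσ]
    by_cases h1 : k = jt
    · rw [if_pos h1, if_pos h1]
    · rw [if_neg h1, if_neg h1]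
      by_cases h2 : k = p
      · rw [if_pos h2, if_pos h2]
      · rw [if_neg h2, if_neg h2]
  have hσinv : ∀ k, σ (σ k) = k := by
    intro k; simp only [hσ]
    split_ifs <;> omega
  have hσrange : ∀ k, is j ≤ k → k < is (j+1) → is j ≤ σ k ∧ σ k < is (j+1) := by
    intro k h1 h2; simp only [hσ]
    split_ifs <;> omega
  have hother : ∀ v, 1 ≤ v → v ≤ m → v ≠ j → ∀ k, is v ≤ k → k < is (v+1) → s' k = s k := by
    intro v hv1 hvm hvj k hk1 hk2
    rw [hs' k]
    have hne : k ≠ jt ∧ k ≠ p := by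
      rcases lt_or_gt_of_ne hvj with h | h
      · have : is (v+1) ≤ is j := his_mono (v+1) j (by omega) (by omega) (by omega)
        omega
      · have : is (j+1) ≤ is v := his_mono (j+1) v (by omega) (by omega) (by omega)
        omega
    simp only [hne.1, hne.2, if_false]
  refine ⟨?_, ?_, ?_⟩
  · intro i
    have hcj' : c' j = c j - 1 := by rw [hc' j]; simp
    rw [hcj']
    constructor
    · rintro ⟨hiV, hiw, hiX⟩
      obtain ⟨k, hk1, hk2, hk3⟩ := (hrep j hj1 hjm i).mp ⟨hiV, hiX⟩
      have hkjt : k ≠ jt := by intro h; exact hiw (by rw [← hk3, h, hjtw])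
      by_cases hkp : k = p
      · refine ⟨jt, hjt1, by omega, ?_⟩
        rw [hs'σ]; simp only [hσ]; simp [← hkp, hk3]
      · refine ⟨k, hk1, by omega, ?_⟩
        rw [hs'σ]; simp only [hσ]; simp [hkjt, hkp, hk3]
    · rintro ⟨k, hk1, hk2, hk3⟩
      have hkp : k ≠ p := by omega
      by_cases hkjt : k = jt
      · rw [hs'σ] at hk3; simp only [hσ, hkjt] at hk3
        simp at hk3
        have : p ≠ jt := by omega
        have hpmem : i ∈ V ∧ X i j = true :=
          (hrep j hj1 hjm i).mpr ⟨p, hjp, by omega, hk3⟩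
        refine ⟨hpmem.1, ?_, hpmem.2⟩
        intro hiw
        exact this (hs_inj j hj1 hjm p jt hjp hplt hjt1 hjtlt (by rw [hk3, hiw, hjtw]))
      · rw [hs'σ] at hk3; simp only [hσ] at hk3
        rw [if_neg hkjt, if_neg hkp] at hk3
        have hmem : i ∈ V ∧ X i j = true :=
          (hrep j hj1 hjm i).mpr ⟨k, hk1, by omega, hk3⟩
        refine ⟨hmem.1, ?_, hmem.2⟩
        intro hiw
        exact hkjt (hs_inj j hj1 hjm k jt (by omega) (by omega) hjt1 hjtlt (by rw [hk3, hiw, hjtw]))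
  · intro v hv1 hvm k l hk1 hk2 hl1 hl2 heq
    by_cases hvj : v = j
    · subst hvj
      rw [hs'σ, hs'σ] at heq
      have hk := hσrange k hk1 hk2
      have hl := hσrange l hl1 hl2
      have := hs_inj v hv1 hvm (σ k) (σ l) hk.1 hk.2 hl.1 hl.2 heq
      have h2 := congrArg σ this
      rwa [hσinv, hσinv] at h2
    · rw [hother v hv1 hvm hvj k hk1 hk2, hother v hv1 hvm hvj l hl1 hl2] at heq
      exact hs_inj v hv1 hvm k l hk1 hk2 hl1 hl2 heq
  · intro v hv1 hvm i
    by_cases hvj : v = j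
    · subst hvj
      rw [← hs_im v hv1 hvm i]
      constructor
      · rintro ⟨k, hk1, hk2, hk3⟩
        rw [hs'σ] at hk3
        have hk := hσrange k hk1 hk2
        exact ⟨σ k, hk.1, hk.2, hk3⟩
      · rintro ⟨k, hk1, hk2, hk3⟩
        have hk := hσrange k hk1 hk2
        refine ⟨σ k, hk.1, hk.2, ?_⟩
        rw [hs'σ, hσinv, hk3]
    · rw [← hs_im v hv1 hvm i]
      constructor
      · rintro ⟨k, hk1, hk2, hk3⟩
        rw [hother v hv1 hvm hvj k hk1 hk2] at hk3
        exact ⟨k, hk1, hk2, hk3⟩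
      · rintro ⟨k, hk1, hk2, hk3⟩
        exact ⟨k, hk1, hk2, by rw [hother v hv1 hvm hvj k hk1 hk2, hk3]⟩
end
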